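/- (Deterministic form of Proposition 3.1.) Let L ≥ 2, let ξ⋆ : Fin L → ℝ be strictly increasing, and let (P_N) be a sequence of probability measures on Ω such that for every ε > 0, P_N({ξ ∈ Ω : |ξ(l) − ξ⋆(l)| ≤ ε for all l}) → 1 as N → ∞. Then for every 0 < α ≤ 1/2 and 0 < γ ≤ 1, there exists N₀ such that for all N ≥ N₀, the global statement constructed from P_N with local error zero satisfies G_N(α,0,γ) = {ξ ∈ Ω : ξ is strictly increasing}; moreover P_N(G_N(α,0,γ)) → 1 as N → ∞. (Thus in the large-data limit the global statement asserts the true ordering ξ_1 ≺ ⋯ ≺ ξ_L with posterior probability tending to one.) -/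

import Mathlib

open MeasureTheory Set

/-- Elementary statement: parameter `l` is ordered higher than `l'`. -/
def Elem (L : ℕ) (l l' : Fin L) : Set (Fin L → ℝ) := {ξ | ξ l' < ξ l}

/-- Indices ordered lower than `l` with posterior probability at least `1 - α`. -/
def underA {L : ℕ} (P : Measure (Fin L → ℝ)) (α : ℝ) (l : Fin L) : Set (Fin L) :=
  {l' | (P (Elem L l l')).toReal > 1 - α}

/-- Indices ordered higher than `l` with posterior probability at least `1 - α`. -/
def overA {L : ℕ} (P : Measure (Fin L → ℝ)) (α : ℝ) (l : Fin L) : Set (Fin L) :=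
  {l' | (P (Elem L l' l)).toReal > 1 - α}

/-- Local statement `A(l, α)`. -/
def locA {L : ℕ} (P : Measure (Fin L → ℝ)) (α : ℝ) (l : Fin L) : Set (Fin L → ℝ) :=
  (⋂ l' ∈ underA P α l, Elem L l l') ∩ (⋂ l' ∈ overA P α l, Elem L l' l)

/-- Local statement with local error `t`, `A(l, α, t)`. -/
def locAt {L : ℕ} (P : Measure (Fin L → ℝ)) (α t : ℝ) (l : Fin L) : Set (Fin L → ℝ) :=
  ⋃ (u : Set (Fin L)) (v : Set (Fin L)) (_ : u ⊆ underA P α l) (_ : v ⊆ overA P α l)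
    (_ : (1 - t) * ((underA P α l ∪ overA P α l).ncard : ℝ) ≤ (u.ncard : ℝ) + (v.ncard : ℝ)),
    (⋂ l' ∈ u, Elem L l l') ∩ (⋂ l' ∈ v, Elem L l' l)

/-- Indices whose local statements have posterior probability at least `1 - γ`. -/
def GsetI {L : ℕ} (P : Measure (Fin L → ℝ)) (α t γ : ℝ) : Set (Fin L) :=
  {l | (P (locAt P α t l)).toReal ≥ 1 - γ}

/-- Global statement `G(α, t, γ)`. -/
def globG {L : ℕ} (P : Measure (Fin L → ℝ)) (α t γ : ℝ) : Set (Fin L → ℝ) :=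
  ⋂ l ∈ GsetI P α t γ, locAt P α t l

/-- Global statement with global error `q`, `G(α, t, γ, q)`. -/
def globGq {L : ℕ} (P : Measure (Fin L → ℝ)) (α t γ q : ℝ) : Set (Fin L → ℝ) :=
  ⋃ (G : Set (Fin L)) (_ : G ⊆ GsetI P α t γ)
    (_ : (1 - q) * ((GsetI P α t γ).ncard : ℝ) ≤ (G.ncard : ℝ)),
    ⋂ l ∈ G, locAt P α t l

/-!
Once more than `max (1 - α) (1 - γ)` of the mass sits on the open set of strictly increasing
parameters (which concentration at `ξs` eventually guarantees), a pair `E(l, l')` has probability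
above `1 - α ≥ 1/2` exactly when `l' < l`. So `underA` and `overA` are the indices below and
above `l`; being disjoint, local error `0` forces the full local statement `locA`, each `locA`
contains all strictly increasing parameters and is therefore selected, and the intersection of
all of them is strict monotonicity itself.
-/

open Filter Topology

lemma toReal_measure_add_le_one {Ω : Type*} [MeasurableSpace Ω] (Q : Measure Ω)
    [IsProbabilityMeasure Q] {s t : Set Ω} (hst : Disjoint s t) (hs : MeasurableSet s) :
    (Q s).toReal + (Q t).toReal ≤ 1 := by
  rw [← measureReal_def, ← measureReal_def, ← measureReal_union' hst hs]
  exact measureReal_le_one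

lemma Set.eq_and_eq_of_ncard_union_le {β : Type*} [Finite β] {u v U V : Set β} (hu : u ⊆ U)
    (hv : v ⊆ V) (hUV : Disjoint U V) (h : (U ∪ V).ncard ≤ u.ncard + v.ncard) :
    u = U ∧ v = V := by
  rw [ncard_union_eq hUV] at h
  have := ncard_le_ncard hu
  have := ncard_le_ncard hv
  exact ⟨eq_of_subset_of_ncard_le hu (by omega), eq_of_subset_of_ncard_le hv (by omega)⟩

lemma isOpen_setOf_strictMono {ι α : Type*} [Preorder ι] [Finite ι] [TopologicalSpace α]
    [LinearOrder α] [OrderClosedTopology α] : IsOpen {ξ : ι → α | StrictMono ξ} := by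
  simp only [StrictMono, ofPred_forall]
  exact isOpen_iInter_of_finite fun a => isOpen_iInter_of_finite fun b =>
    isOpen_iInter_of_finite fun _ => isOpen_lt (continuous_apply a) (continuous_apply b)

lemma measurableSet_elem {L : ℕ} (l l' : Fin L) : MeasurableSet (Elem L l l') :=
  measurableSet_lt (measurable_pi_apply l') (measurable_pi_apply l)

section

variable {L : ℕ} (Q : Measure (Fin L → ℝ)) [IsProbabilityMeasure Q] {α γ : ℝ}

lemma disjoint_underA_overA (hα : α ≤ 1 / 2) (l : Fin L) :
    Disjoint (underA Q α l) (overA Q α l) := by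
  refine Set.disjoint_left.2 fun l' hunder hover => ?_
  have hdisj : Disjoint (Elem L l l') (Elem L l' l) :=
    Set.disjoint_left.2 fun ξ (h : ξ l' < ξ l) h' => lt_asymm h h'
  have := toReal_measure_add_le_one Q hdisj (measurableSet_elem l l')
  simp only [underA, overA, mem_ofPred_eq] at hunder hover
  linarith

lemma locAt_zero_eq_locA (hα : α ≤ 1 / 2) (l : Fin L) : locAt Q α 0 l = locA Q α l := by
  have hdisj := disjoint_underA_overA Q hα l
  apply subset_antisymm
  · simp only [locAt, iUnion_subset_iff]
    intro u v hu hv hcard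
    rw [sub_zero, one_mul] at hcard
    obtain ⟨rfl, rfl⟩ := eq_and_eq_of_ncard_union_le hu hv hdisj (by exact_mod_cast hcard)
    exact subset_rfl
  · intro ξ hξ
    simp only [locAt, mem_iUnion]
    refine ⟨underA Q α l, overA Q α l, subset_rfl, subset_rfl, ?_, hξ⟩
    rw [ncard_union_eq hdisj]
    push_cast
    linarith

variable {Q} (hα : α ≤ 1 / 2) (hS : 1 - α < (Q {ξ | StrictMono ξ}).toReal)
include hα hS

lemma lt_toReal_measure_elem_iff (a b : Fin L) : 1 - α < (Q (Elem L a b)).toReal ↔ b < a := by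
  refine ⟨fun h => ?_, fun hba => ?_⟩
  · by_contra! hab
    have hdisj : Disjoint (Elem L a b) {ξ | StrictMono ξ} :=
      Set.disjoint_left.2 fun ξ h hξ => (hξ.monotone hab).not_gt h
    have := toReal_measure_add_le_one Q hdisj (measurableSet_elem a b)
    linarith
  · exact hS.trans_le <| ENNReal.toReal_mono (measure_ne_top Q _) <|
      measure_mono fun ξ hξ => hξ hba

lemma underA_eq_Iio (l : Fin L) : underA Q α l = Iio l :=
  ext fun l' => lt_toReal_measure_elem_iff hα hS l l'

lemma overA_eq_Ioi (l : Fin L) : overA Q α l = Ioi l :=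
  ext fun l' => lt_toReal_measure_elem_iff hα hS l' l

lemma setOf_strictMono_subset_locA (l : Fin L) : {ξ | StrictMono ξ} ⊆ locA Q α l := by
  intro ξ hξ
  rw [locA, underA_eq_Iio hα hS, overA_eq_Ioi hα hS]
  exact ⟨mem_iInter₂.2 fun _ h => hξ h, mem_iInter₂.2 fun _ h => hξ h⟩

lemma iInter_locA_subset_setOf_strictMono : ⋂ l, locA Q α l ⊆ {ξ | StrictMono ξ} := by
  intro ξ hξ a b hab
  have hb := mem_iInter.1 hξ b
  rw [locA, underA_eq_Iio hα hS] at hb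
  exact mem_iInter₂.1 hb.1 a hab

lemma GsetI_zero_eq_univ (hγ : 1 - γ ≤ (Q {ξ | StrictMono ξ}).toReal) :
    GsetI Q α 0 γ = univ :=
  eq_univ_of_forall fun l => by
    rw [GsetI, mem_ofPred_eq, locAt_zero_eq_locA Q hα]
    exact hγ.trans <| ENNReal.toReal_mono (measure_ne_top Q _) <|
      measure_mono (setOf_strictMono_subset_locA hα hS l)

lemma globG_zero_eq_setOf_strictMono (hγ : 1 - γ ≤ (Q {ξ | StrictMono ξ}).toReal) :
    globG Q α 0 γ = {ξ | StrictMono ξ} := by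
  simp only [globG, GsetI_zero_eq_univ hα hS hγ, locAt_zero_eq_locA Q hα, mem_univ, iInter_true]
  exact (iInter_locA_subset_setOf_strictMono hα hS).antisymm
    (subset_iInter (setOf_strictMono_subset_locA hα hS))

end

lemma tendsto_measure_setOf_strictMono {L : ℕ} {ξs : Fin L → ℝ} (hmono : StrictMono ξs)
    {P : ℕ → Measure (Fin L → ℝ)} (hP : ∀ N, IsProbabilityMeasure (P N))
    (hconc : ∀ ε : ℝ, 0 < ε →
      Tendsto (fun N => ((P N) {ξ : Fin L → ℝ | ∀ l : Fin L, |ξ l - ξs l| ≤ ε}).toReal)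
        atTop (𝓝 1)) :
    Tendsto (fun N => ((P N) {ξ | StrictMono ξ}).toReal) atTop (𝓝 1) := by
  obtain ⟨ε, hε, hball⟩ :=
    Metric.nhds_basis_closedBall.mem_iff.1 (isOpen_setOf_strictMono.mem_nhds hmono)
  have hclosedBall : {ξ : Fin L → ℝ | ∀ l, |ξ l - ξs l| ≤ ε} = Metric.closedBall ξs ε := by
    ext ξ
    simp only [Metric.mem_closedBall, dist_pi_le_iff hε.le, Real.dist_eq, mem_ofPred_eq]
  refine tendsto_of_tendsto_of_tendsto_of_le_of_le (hconc ε hε) tendsto_const_nhds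
    (fun N => ?_) (fun N => ?_)
  · rw [hclosedBall]
    exact ENNReal.toReal_mono (measure_ne_top _ _) (measure_mono hball)
  · exact ENNReal.toReal_le_of_le_ofReal zero_le_one (by simpa using prob_le_one)

theorem stmt_17_general (L : ℕ) (ξs : Fin L → ℝ) (hmono : StrictMono ξs)
    (P : ℕ → Measure (Fin L → ℝ)) (hP : ∀ N, IsProbabilityMeasure (P N))
    (hconc : ∀ ε : ℝ, 0 < ε →
      Filter.Tendsto (fun N => ((P N) {ξ : Fin L → ℝ | ∀ l : Fin L, |ξ l - ξs l| ≤ ε}).toReal)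
        Filter.atTop (nhds 1)) :
    ∀ α γ : ℝ, 0 < α → α ≤ 1 / 2 → 0 < γ → γ ≤ 1 →
      (∃ N₀ : ℕ, ∀ N ≥ N₀, globG (P N) α 0 γ = {ξ : Fin L → ℝ | StrictMono ξ}) ∧
      Filter.Tendsto (fun N => ((P N) (globG (P N) α 0 γ)).toReal) Filter.atTop (nhds 1) := by
  intro α γ hα hα2 hγ _
  have hS := tendsto_measure_setOf_strictMono hmono hP hconc
  obtain ⟨N₀, hN₀⟩ := eventually_atTop.1 <|
    (hS.eventually (eventually_gt_nhds (by linarith : 1 - α < 1))).and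
      (hS.eventually (eventually_gt_nhds (by linarith : 1 - γ < 1)))
  have hglobG : ∀ N ≥ N₀, globG (P N) α 0 γ = {ξ | StrictMono ξ} := fun N hN =>
    have := hP N
    globG_zero_eq_setOf_strictMono hα2 (hN₀ N hN).1 (hN₀ N hN).2.le
  refine ⟨⟨N₀, hglobG⟩, hS.congr' ?_⟩
  filter_upwards [eventually_ge_atTop N₀] with N hN
  rw [hglobG N hN]

theorem stmt_17 (L : ℕ) (hL : 2 ≤ L) (ξs : Fin L → ℝ) (hmono : StrictMono ξs)
    (P : ℕ → Measure (Fin L → ℝ)) (hP : ∀ N, IsProbabilityMeasure (P N))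
    (hconc : ∀ ε : ℝ, 0 < ε →
      Filter.Tendsto (fun N => ((P N) {ξ : Fin L → ℝ | ∀ l : Fin L, |ξ l - ξs l| ≤ ε}).toReal)
        Filter.atTop (nhds 1)) :
    ∀ α γ : ℝ, 0 < α → α ≤ 1 / 2 → 0 < γ → γ ≤ 1 →
      (∃ N₀ : ℕ, ∀ N ≥ N₀, globG (P N) α 0 γ = {ξ : Fin L → ℝ | StrictMono ξ}) ∧
      Filter.Tendsto (fun N => ((P N) (globG (P N) α 0 γ)).toReal) Filter.atTop (nhds 1) :=
  stmt_17_general L ξs hmono P hP hconc
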